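/- arXiv:2512.23204 — 5 statements merged into one kernel-verified Lean document; each statement's English description precedes it below -/
import Mathlib

section
/- Let U ⊆ ℂ^m be open and f : U → ℂ holomorphic. Write f(x+iy) = u(x,y) + i v(x,y) for (x,y) ∈ U_ℝ := {(x,y) ∈ ℝ^m × ℝ^m : x+iy ∈ U}, where u, v : U_ℝ → ℝ are real-valued. Let u''(x,y) and v''(x,y) denote the 2m×2m real Hessian matrices of u and v in the variables (x₁,…,x_m,y₁,…,y_m), and let f''(z) := (∂²f/∂z_j∂z_k)_{j,k=1}^m denote the m×m complex Hessian. Then for all θ₁, θ₂ ∈ ℝ and all (x,y) ∈ U_ℝ: det(θ₁ u''(x,y) + θ₂ v''(x,y)) = (−1)^m (θ₁² + θ₂²)^m |det f''(x+iy)|². -/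
/-!
Writing `c = θ₁ - iθ₂`, we have `θ₁ u + θ₂ v = Re (c f) ∘ toC`, and the chain rule identifies the
real Hessian of `Re (c f)` at `x + iy` with the matrix `[[Re K, -Im K], [-Im K, -Re K]]` of the
real quadratic form `w ↦ Re (wᵀ K w)`, where `K = c f''`. Conjugating its complexification by the
unimodular matrix `[[1, 0], [i, 1]]` makes it block triangular with diagonal blocks `conj K` and
`-K`, so its determinant is `(-1)^m |det K|^2 = (-1)^m (θ₁² + θ₂²)^m |det f''|^2`.

That the real Hessians exist at all needs the directional derivatives of `f` to be holomorphic
again; this follows by differentiating the Cauchy integral formula for them under the integral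
sign, with the Cauchy estimates supplying the domination.
-/

open scoped BigOperators

noncomputable section

/-- Identify a pair `(x, y) ∈ ℝ^m × ℝ^m` with the point `x + iy ∈ ℂ^m`. -/
def toC {m : ℕ} (p : (Fin m → ℝ) × (Fin m → ℝ)) : Fin m → ℂ :=
  fun j => (p.1 j : ℂ) + (p.2 j : ℂ) * Complex.I

/-- Standard basis vectors of `ℝ^m × ℝ^m`, indexed by `Fin m ⊕ Fin m`. -/
def eb {m : ℕ} : Fin m ⊕ Fin m → (Fin m → ℝ) × (Fin m → ℝ) :=
  Sum.elim (fun i => (Pi.single i 1, 0)) (fun i => (0, Pi.single i 1))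

/-- The `2m × 2m` real Hessian of `g : ℝ^m × ℝ^m → ℝ` in the variables `(x₁,…,x_m,y₁,…,y_m)`. -/
def hess2 {m : ℕ} (g : (Fin m → ℝ) × (Fin m → ℝ) → ℝ) (p : (Fin m → ℝ) × (Fin m → ℝ)) :
    Matrix (Fin m ⊕ Fin m) (Fin m ⊕ Fin m) ℝ :=
  Matrix.of fun i j => fderiv ℝ (fun q => fderiv ℝ g q (eb j)) p (eb i)

/-- The `m × m` complex Hessian of `f : ℂ^m → ℂ`. -/
def chess {m : ℕ} (f : (Fin m → ℂ) → ℂ) (z : Fin m → ℂ) : Matrix (Fin m) (Fin m) ℂ :=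
  Matrix.of fun j k => fderiv ℂ (fun w => fderiv ℂ f w (Pi.single k 1)) z (Pi.single j 1)

section Regularity

open Metric Set Complex Filter Topology MeasureTheory

variable {E F : Type*} [NormedAddCommGroup E] [NormedSpace ℂ E]
  [NormedAddCommGroup F] [NormedSpace ℂ F]

lemma HasFDerivAt.hasDerivAt_comp_add_smul {f : E → F} {f' : E →L[ℂ] F} {z c : E} {t : ℂ}
    (hf : HasFDerivAt f f' (z + t • c)) : HasDerivAt (fun s : ℂ => f (z + s • c)) (f' c) t := by
  have hline : HasDerivAt (fun s : ℂ => z + s • c) c t := by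
    simpa using ((hasDerivAt_id t).smul_const c).const_add z
  exact hf.comp_hasDerivAt t hline

lemma norm_add_smul_sub_le (z₀ z c : E) (t : ℂ) :
    ‖z + t • c - z₀‖ ≤ ‖z - z₀‖ + ‖t‖ * ‖c‖ := by
  rw [add_sub_right_comm, ← norm_smul]
  exact norm_add_le _ _

lemma norm_fderiv_le_of_forall_mem_closedBall {f : E → F} {z : E} {r C : ℝ} (hr : 0 < r)
    (hf : DifferentiableOn ℂ f (closedBall z r)) (hC : ∀ w ∈ closedBall z r, ‖f w‖ ≤ C) :
    ‖fderiv ℂ f z‖ ≤ C / r := by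
  have hC₀ : 0 ≤ C := (norm_nonneg _).trans (hC z (mem_closedBall_self hr.le))
  refine ContinuousLinearMap.opNorm_le_bound _ (by positivity) fun a => ?_
  rcases eq_or_ne a 0 with rfl | ha
  · simp
  have ha' : 0 < ‖a‖ := norm_pos_iff.mpr ha
  have hmaps : MapsTo (fun t : ℂ => z + t • a) (closedBall 0 (r / ‖a‖)) (closedBall z r) := by
    intro t ht
    rw [mem_closedBall_zero_iff, le_div_iff₀ ha'] at ht
    rw [mem_closedBall, dist_eq_norm]
    simpa using (norm_add_smul_sub_le z z a t).trans (by simpa using ht)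
  have hφ : DiffContOnCl ℂ (fun t : ℂ => f (z + t • a)) (ball 0 (r / ‖a‖)) :=
    (hf.comp (by fun_prop) hmaps).diffContOnCl_ball subset_rfl
  have hderiv : deriv (fun t : ℂ => f (z + t • a)) 0 = fderiv ℂ f z a := by
    refine HasDerivAt.deriv (HasFDerivAt.hasDerivAt_comp_add_smul ?_)
    simpa using (hf.differentiableAt (closedBall_mem_nhds z hr)).hasFDerivAt
  have := norm_deriv_le_of_forall_mem_sphere_norm_le (by positivity) hφ
    fun t ht => hC _ (hmaps (sphere_subset_closedBall ht))
  rw [hderiv] at this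
  calc ‖fderiv ℂ f z a‖ ≤ C / (r / ‖a‖) := this
    _ = C / r * ‖a‖ := by field_simp

lemma exists_eventually_norm_fderiv_le {f : E → F} {U : Set E} (hU : IsOpen U)
    (hf : DifferentiableOn ℂ f U) {z₀ : E} (hz₀ : z₀ ∈ U) :
    ∃ C, ∀ᶠ z in 𝓝 z₀, ‖fderiv ℂ f z‖ ≤ C := by
  have hnear : ∀ᶠ w in 𝓝 z₀, w ∈ U ∧ ‖f w‖ ≤ ‖f z₀‖ + 1 :=
    have hcont := (hf.continuousOn.continuousAt (hU.mem_nhds hz₀)).norm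
    Filter.Eventually.and (hU.mem_nhds hz₀) <|
      (hcont.eventually (gt_mem_nhds (lt_add_one _))).mono fun _ => le_of_lt
  obtain ⟨δ, hδ, hball⟩ := nhds_basis_closedBall.mem_iff.mp hnear
  refine ⟨(‖f z₀‖ + 1) / (δ / 2), ?_⟩
  filter_upwards [ball_mem_nhds z₀ (half_pos hδ)] with z hz
  have hsub : closedBall z (δ / 2) ⊆ closedBall z₀ δ :=
    closedBall_subset_closedBall' (by rw [mem_ball] at hz; linarith)
  exact norm_fderiv_le_of_forall_mem_closedBall (half_pos hδ)
    (fun w hw => (hf.differentiableAt (hU.mem_nhds (hball (hsub hw)).1)).differentiableWithinAt)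
    fun w hw => (hball (hsub hw)).2

lemma fderiv_apply_eq_cderiv [CompleteSpace F] {f : E → F} {U : Set E} (hU : IsOpen U)
    (hf : DifferentiableOn ℂ f U) {z c : E} {r : ℝ} (hr : 0 < r)
    (hzr : ∀ t ∈ closedBall (0 : ℂ) r, z + t • c ∈ U) :
    fderiv ℂ f z c = cderiv r (fun t => f (z + t • c)) 0 := by
  have hline : Continuous fun t : ℂ => z + t • c := by fun_prop
  have hφ : DifferentiableOn ℂ (fun t : ℂ => f (z + t • c)) ((fun t : ℂ => z + t • c) ⁻¹' U) :=
    hf.comp (by fun_prop) (mapsTo_preimage _ _)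
  rw [cderiv_eq_deriv (hU.preimage hline) hφ hr hzr]
  refine (HasFDerivAt.hasDerivAt_comp_add_smul ?_).deriv.symm
  have hz : z ∈ U := by simpa using hzr 0 (by simp [hr.le])
  simpa using (hf.differentiableAt (hU.mem_nhds hz)).hasFDerivAt

lemma differentiableAt_cderiv_comp_add_smul [FiniteDimensional ℂ E] [CompleteSpace F]
    [SecondCountableTopology F] {f : E → F} {U : Set E} (hU : IsOpen U)
    (hf : DifferentiableOn ℂ f U) {C : ℝ} (hC : ∀ w ∈ U, ‖fderiv ℂ f w‖ ≤ C) {z₀ c : E} {ε r : ℝ}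
    (hε : 0 < ε) (hr : 0 < r) (hmaps : ∀ z ∈ ball z₀ ε, ∀ t ∈ sphere (0 : ℂ) r, z + t • c ∈ U) :
    DifferentiableAt ℂ (fun z => cderiv r (fun t => f (z + t • c)) 0) z₀ := by
  borelize E
  set γ := circleMap 0 r
  have hγ : ∀ θ, γ θ ∈ sphere (0 : ℂ) r := fun θ => by simp [γ, hr.le]
  have hγ₀ : ∀ θ, γ θ ≠ 0 := fun θ => circleMap_ne_center hr.ne'
  have hweight : Continuous fun θ => deriv γ θ * (γ θ ^ 2)⁻¹ := by
    simp only [γ, deriv_circleMap]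
    fun_prop (disch := exact fun θ => pow_ne_zero 2 (hγ₀ θ))
  set Φ : E → ℝ → F := fun z θ => (deriv γ θ * (γ θ ^ 2)⁻¹) • f (z + γ θ • c)
  set Φ' : E → ℝ → E →L[ℂ] F := fun z θ => (deriv γ θ * (γ θ ^ 2)⁻¹) • fderiv ℂ f (z + γ θ • c)
  have hΦ_cont : ∀ z ∈ ball z₀ ε, Continuous (Φ z) := fun z hz =>
    hweight.smul (hf.continuousOn.comp_continuous (by fun_prop) fun θ => hmaps z hz _ (hγ θ))
  have hΦ_deriv : ∀ z ∈ ball z₀ ε, ∀ θ, HasFDerivAt (fun z => Φ z θ) (Φ' z θ) z := by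
    intro z hz θ
    have hdiff := (hf.differentiableAt (hU.mem_nhds (hmaps z hz _ (hγ θ)))).hasFDerivAt
    have := (hdiff.comp z ((hasFDerivAt_id z).add_const (γ θ • c))).const_smul
      (deriv γ θ * (γ θ ^ 2)⁻¹)
    rwa [ContinuousLinearMap.comp_id] at this
  have hΦ'_bound : ∀ z ∈ ball z₀ ε, ∀ θ, ‖Φ' z θ‖ ≤ r⁻¹ * C := by
    intro z hz θ
    have hw : ‖deriv γ θ * (γ θ ^ 2)⁻¹‖ = r⁻¹ := by
      simp only [γ, deriv_circleMap, sq, mul_inv_rev, norm_mul, norm_inv, norm_circleMap_zero,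
        abs_of_pos hr, norm_I, mul_one]
      field_simp
    rw [norm_smul, hw]
    exact mul_le_mul_of_nonneg_left (hC _ (hmaps z hz _ (hγ θ))) (by positivity)
  have hint := intervalIntegral.hasFDerivAt_integral_of_dominated_of_fderiv_le
    (μ := volume) (a := 0) (b := 2 * Real.pi) (bound := fun _ => r⁻¹ * C)
    (ball_mem_nhds z₀ hε)
    (eventually_of_mem (ball_mem_nhds z₀ hε) fun z hz => (hΦ_cont z hz).aestronglyMeasurable)
    ((hΦ_cont z₀ (mem_ball_self hε)).intervalIntegrable _ _)
    (hweight.aestronglyMeasurable.smul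
      ((measurable_fderiv ℂ f).comp (by fun_prop)).aestronglyMeasurable)
    (ae_of_all _ fun θ _ z hz => hΦ'_bound z hz θ) intervalIntegrable_const
    (ae_of_all _ fun θ _ z hz => hΦ_deriv z hz θ)
  simp only [cderiv, circleIntegral, sub_zero, smul_smul]
  exact hint.differentiableAt.const_smul _

theorem DifferentiableOn.differentiableAt_fderiv_apply [FiniteDimensional ℂ E] [CompleteSpace F]
    [SecondCountableTopology F] {f : E → F} {U : Set E} (hU : IsOpen U)
    (hf : DifferentiableOn ℂ f U) (c : E) {z₀ : E} (hz₀ : z₀ ∈ U) :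
    DifferentiableAt ℂ (fun z => fderiv ℂ f z c) z₀ := by
  obtain ⟨C, hC⟩ := exists_eventually_norm_fderiv_le hU hf hz₀
  obtain ⟨δ, hδ, hball⟩ := eventually_nhds_iff_ball.mp (Filter.Eventually.and (hU.mem_nhds hz₀) hC)
  set r := δ / 2 / (‖c‖ + 1)
  have hr : 0 < r := by positivity
  have hmaps : ∀ z ∈ ball z₀ (δ / 2), ∀ t ∈ closedBall (0 : ℂ) r, z + t • c ∈ ball z₀ δ := by
    intro z hz t ht
    rw [mem_closedBall_zero_iff] at ht
    rw [mem_ball, dist_eq_norm] at hz ⊢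
    have : ‖t‖ * ‖c‖ ≤ δ / 2 := by
      calc ‖t‖ * ‖c‖ ≤ r * (‖c‖ + 1) := by gcongr; linarith
        _ = δ / 2 := by simp only [r]; field_simp
    linarith [norm_add_smul_sub_le z₀ z c t]
  have hfδ : DifferentiableOn ℂ f (ball z₀ δ) := hf.mono fun w hw => (hball w hw).1
  refine (differentiableAt_cderiv_comp_add_smul isOpen_ball hfδ (fun w hw => (hball w hw).2)
    (half_pos hδ) hr fun z hz t ht => hmaps z hz t (sphere_subset_closedBall ht))
    |>.congr_of_eventuallyEq ?_
  filter_upwards [ball_mem_nhds z₀ (half_pos hδ)] with z hz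
  exact fderiv_apply_eq_cderiv isOpen_ball hfδ hr (hmaps z hz)

end Regularity

section RealHessian

open Complex

variable {m : ℕ}

def toCLM (m : ℕ) : ((Fin m → ℝ) × (Fin m → ℝ)) →L[ℝ] (Fin m → ℂ) :=
  LinearMap.toContinuousLinearMap
    { toFun := toC
      map_add' := fun p q => funext fun k => by
        simp only [toC, Prod.fst_add, Prod.snd_add, Pi.add_apply, ofReal_add]; ring
      map_smul' := fun a p => funext fun k => by
        simp only [toC, Prod.smul_fst, Prod.smul_snd, Pi.smul_apply, smul_eq_mul, ofReal_mul,
          RingHom.id_apply, real_smul]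
        ring }

@[simp]
lemma toCLM_apply (p : (Fin m → ℝ) × (Fin m → ℝ)) : toCLM m p = toC p := rfl

def ebCoeff : Fin m ⊕ Fin m → ℂ := Sum.elim (fun _ => 1) (fun _ => I)

def ebIndex : Fin m ⊕ Fin m → Fin m := Sum.elim id id

lemma toC_eb (j : Fin m ⊕ Fin m) :
    toC (eb j) = ebCoeff j • (Pi.single (ebIndex j) 1 : Fin m → ℂ) := by
  rcases j with k | k <;> funext l <;> by_cases h : l = k <;>
    simp [toC, eb, ebCoeff, ebIndex, h]

lemma fderiv_comp_toC_eb (e : ℂ →L[ℝ] ℝ) {g : (Fin m → ℂ) → ℂ} {p : (Fin m → ℝ) × (Fin m → ℝ)}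
    (hg : DifferentiableAt ℂ g (toC p)) (j : Fin m ⊕ Fin m) :
    fderiv ℝ (fun q => e (g (toC q))) p (eb j)
      = e (ebCoeff j * fderiv ℂ g (toC p) (Pi.single (ebIndex j) 1)) := by
  have hcomp : HasFDerivAt (fun q => e (g (toCLM m q)))
      (e.comp (((fderiv ℂ g (toC p)).restrictScalars ℝ).comp (toCLM m))) p :=
    e.hasFDerivAt.comp p ((hg.hasFDerivAt.restrictScalars ℝ).comp p (toCLM m).hasFDerivAt)
  simp only [toCLM_apply] at hcomp
  rw [hcomp.fderiv]
  simp [toC_eb]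

lemma hess2_comp_toC {f : (Fin m → ℂ) → ℂ} {U : Set (Fin m → ℂ)} (hU : IsOpen U)
    (hf : DifferentiableOn ℂ f U) (e : ℂ →L[ℝ] ℝ) {p : (Fin m → ℝ) × (Fin m → ℝ)}
    (hp : toC p ∈ U) (i j : Fin m ⊕ Fin m) :
    hess2 (fun q => e (f (toC q))) p i j
      = e (ebCoeff i * ebCoeff j * chess f (toC p) (ebIndex i) (ebIndex j)) := by
  set G := fun w => fderiv ℂ f w (Pi.single (ebIndex j) 1)
  have hfirst : (fun q => fderiv ℝ (fun q => e (f (toC q))) q (eb j))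
      =ᶠ[nhds p] fun q => (e.comp (ContinuousLinearMap.mul ℝ ℂ (ebCoeff j))) (G (toC q)) := by
    filter_upwards [(toCLM m).continuous.isOpen_preimage U hU |>.mem_nhds hp] with q hq
    exact fderiv_comp_toC_eb e (hf.differentiableAt (hU.mem_nhds hq)) j
  have hG : DifferentiableAt ℂ G (toC p) := hf.differentiableAt_fderiv_apply hU _ hp
  rw [hess2, Matrix.of_apply, hfirst.fderiv_eq, fderiv_comp_toC_eb _ hG i]
  simp only [ContinuousLinearMap.comp_apply, ContinuousLinearMap.mul_apply', chess,
    Matrix.of_apply, G]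
  congr 1
  ring

open Matrix in
lemma det_fromBlocks_re_im {n : Type*} [Fintype n] [DecidableEq n] (K : Matrix n n ℂ) :
    (fromBlocks (K.map re) (-K.map im) (-K.map im) (-K.map re)).det
      = (-1) ^ Fintype.card n * normSq K.det := by
  set A : Matrix n n ℂ := K.map fun z => (z.re : ℂ)
  set B : Matrix n n ℂ := K.map fun z => (z.im : ℂ)
  set P : Matrix (n ⊕ n) (n ⊕ n) ℂ := fromBlocks 1 0 (I • 1) 1
  have hP : P.det = 1 := by simp [P]
  have hAB : A + I • B = K := by ext; simp [A, B, mul_comm I, re_add_im]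
  have hAB' : A - I • B = K.map (starRingEnd ℂ) := by ext; apply Complex.ext <;> simp [A, B]
  have hconj :
      P * fromBlocks A (-B) (-B) (-A) * P = fromBlocks (A - I • B) (-B) 0 (-(A + I • B)) := by
    simp only [P, fromBlocks_multiply, fromBlocks_inj, Matrix.one_mul, Matrix.mul_one,
      Matrix.zero_mul, Matrix.mul_zero, Matrix.smul_mul, Matrix.mul_smul, Matrix.mul_neg]
    refine ⟨?_, ?_, ?_, ?_⟩ <;> match_scalars <;> ring_nf; simp [I_sq]
  have hmap : (fromBlocks (K.map re) (-K.map im) (-K.map im) (-K.map re)).map ofReal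
      = fromBlocks A (-B) (-B) (-A) := by
    simp [A, B, fromBlocks_map, Matrix.map_map, Function.comp_def, Matrix.map_neg]
  apply ofReal_injective
  have hdet : ((fromBlocks (K.map re) (-K.map im) (-K.map im) (-K.map re)).det : ℂ)
      = (fromBlocks A (-B) (-B) (-A)).det := by
    rw [← hmap]
    exact ofRealHom.map_det _
  rw [hdet, ← one_mul (det _), ← hP, ← mul_one (_ * _), ← hP, ← det_mul, ← det_mul, hconj,
    det_fromBlocks_zero₂₁, hAB, hAB', det_neg, ← RingHom.mapMatrix_apply, ← RingHom.map_det]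
  push_cast
  rw [← mul_conj]
  ring

/-- The matrix of the real quadratic form `(x, y) ↦ Re ((x + iy)ᵀ K (x + iy))`. -/
def reForm (K : Matrix (Fin m) (Fin m) ℂ) : Matrix (Fin m ⊕ Fin m) (Fin m ⊕ Fin m) ℝ :=
  Matrix.of fun i j => (ebCoeff i * ebCoeff j * K (ebIndex i) (ebIndex j)).re

lemma reForm_eq_fromBlocks (K : Matrix (Fin m) (Fin m) ℂ) :
    reForm K = Matrix.fromBlocks (K.map re) (-K.map im) (-K.map im) (-K.map re) := by
  ext (i | i) (j | j) <;> simp [reForm, ebCoeff, ebIndex]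

lemma det_reForm (K : Matrix (Fin m) (Fin m) ℂ) :
    (reForm K).det = (-1) ^ m * normSq K.det := by
  rw [reForm_eq_fromBlocks, det_fromBlocks_re_im, Fintype.card_fin]

end RealHessian

/-- the determinant identity relating the real Hessians of the real and imaginary
parts of a holomorphic function to its complex Hessian. -/
theorem statement2
    (m : ℕ) (U : Set (Fin m → ℂ)) (hUopen : IsOpen U)
    (f : (Fin m → ℂ) → ℂ) (hf : DifferentiableOn ℂ f U)
    (u v : (Fin m → ℝ) × (Fin m → ℝ) → ℝ)
    (hu : ∀ p, u p = (f (toC p)).re) (hv : ∀ p, v p = (f (toC p)).im) :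
    ∀ (θ₁ θ₂ : ℝ) (p : (Fin m → ℝ) × (Fin m → ℝ)), toC p ∈ U →
      Matrix.det (θ₁ • hess2 u p + θ₂ • hess2 v p)
        = (-1) ^ m * (θ₁ ^ 2 + θ₂ ^ 2) ^ m *
            ‖Matrix.det (chess f (toC p))‖ ^ 2 := by
  intro θ₁ θ₂ p hp
  set c : ℂ := θ₁ - θ₂ * Complex.I
  have hhess : θ₁ • hess2 u p + θ₂ • hess2 v p = reForm (c • chess f (toC p)) := by
    obtain rfl : u = fun q => Complex.reCLM (f (toC q)) := funext hu
    obtain rfl : v = fun q => Complex.imCLM (f (toC q)) := funext hv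
    ext i j
    rw [Matrix.add_apply, Matrix.smul_apply, Matrix.smul_apply, hess2_comp_toC hUopen hf _ hp,
      hess2_comp_toC hUopen hf _ hp]
    simp only [reForm, Matrix.of_apply, Matrix.smul_apply, smul_eq_mul, Complex.reCLM_apply,
      Complex.imCLM_apply, Complex.mul_re, Complex.mul_im, c, Complex.sub_re, Complex.sub_im,
      Complex.ofReal_re, Complex.ofReal_im, Complex.I_re, Complex.I_im]
    ring
  have hc : Complex.normSq c = θ₁ ^ 2 + θ₂ ^ 2 := by
    simp only [c, Complex.normSq_apply, Complex.sub_re, Complex.sub_im, Complex.mul_re,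
      Complex.mul_im, Complex.ofReal_re, Complex.ofReal_im, Complex.I_re, Complex.I_im]
    ring
  rw [hhess, det_reForm, Matrix.det_smul, Fintype.card_fin, map_mul, map_pow, hc,
    Complex.normSq_eq_norm_sq]
  ring

end
end

section
/- Let m ∈ ℕ, let W ⊆ ℝ^m × ℝ^m be open (with coordinates (x,y) = (x₁,…,x_m,y₁,…,y_m)), and let u, v : W → ℝ be twice continuously differentiable functions satisfying the Cauchy–Riemann equations ∂u/∂x_j = ∂v/∂y_j and ∂u/∂y_j = −∂v/∂x_j on W for all 1 ≤ j ≤ m. Then for all θ₁, θ₂ ∈ ℝ and all p ∈ W: det(θ₁ u''(p) + θ₂ v''(p)) = (θ₁² + θ₂²)^m · det u''(p), where u''(p) and v''(p) denote the 2m×2m Hessian matrices of u and v at p in the variables (x₁,…,x_m,y₁,…,y_m). -/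
open scoped BigOperators

noncomputable section

/-!
The Cauchy–Riemann equations say that the gradient of `v` is the gradient of `u` rotated by the
complex structure `J`; differentiating once more gives `v'' = -u'' J` near every point of `W`.
Hence `θ₁ u'' + θ₂ v'' = u'' (θ₁ - θ₂ J)`, and `θ₁ - θ₂ J` is multiplication by the complex number
`θ₁ - i θ₂` on `ℂ^m` viewed as `ℝ^{2m}`, whose real determinant is `(θ₁² + θ₂²)^m`.
-/

namespace Matrix

theorem det_smul_one_add_smul_J {l R : Type*} [Fintype l] [DecidableEq l] [CommRing R] (a b : R) :
    det (a • (1 : Matrix (l ⊕ l) (l ⊕ l) R) + b • J l R) = (a ^ 2 + b ^ 2) ^ Fintype.card l := by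
  let e : Fin 2 × l ≃ l ⊕ l :=
    (Equiv.prodCongr finTwoEquiv (Equiv.refl l)).trans (Equiv.boolProdEquivSum l)
  have hblock : a • (1 : Matrix (l ⊕ l) (l ⊕ l) R) + b • J l R
      = reindex e e (blockDiagonal fun _ => !![a, -b; b, a]) := by
    ext (i | i) (j | j) <;> by_cases hij : i = j <;>
      simp [e, J, blockDiagonal_apply, hij] <;> rfl
  rw [hblock, det_reindex_self, det_blockDiagonal, Finset.prod_const, det_fin_two_of,
    Finset.card_univ]
  ring

end Matrix

open Filter Topology

section Hessian

variable {m : ℕ} {g h : (Fin m → ℝ) × (Fin m → ℝ) → ℝ} {p : (Fin m → ℝ) × (Fin m → ℝ)}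

theorem hess2_apply_eq_of_eventuallyEq {j k : Fin m ⊕ Fin m}
    (H : (fun q => fderiv ℝ g q (eb j)) =ᶠ[𝓝 p] fun q => fderiv ℝ h q (eb k))
    (i : Fin m ⊕ Fin m) : hess2 g p i j = hess2 h p i k := by
  simp only [hess2, Matrix.of_apply, H.fderiv_eq]

theorem hess2_apply_eq_neg_of_eventuallyEq {j k : Fin m ⊕ Fin m}
    (H : (fun q => fderiv ℝ g q (eb j)) =ᶠ[𝓝 p] fun q => -fderiv ℝ h q (eb k))
    (i : Fin m ⊕ Fin m) : hess2 g p i j = -hess2 h p i k := by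
  simp only [hess2, Matrix.of_apply, H.fderiv_eq, fderiv_fun_neg, neg_apply]

theorem hess2_eq_neg_mul_J_of_eventually_cauchyRiemann
    (hCR1 : ∀ᶠ q in 𝓝 p, ∀ j, fderiv ℝ g q (eb (.inl j)) = fderiv ℝ h q (eb (.inr j)))
    (hCR2 : ∀ᶠ q in 𝓝 p, ∀ j, fderiv ℝ g q (eb (.inr j)) = -fderiv ℝ h q (eb (.inl j))) :
    hess2 h p = -(hess2 g p * Matrix.J (Fin m) ℝ) := by
  have hcol_inr (i : Fin m ⊕ Fin m) (j : Fin m) :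
      hess2 h p i (.inr j) = hess2 g p i (.inl j) :=
    hess2_apply_eq_of_eventuallyEq (hCR1.mono fun q hq => (hq j).symm) i
  have hcol_inl (i : Fin m ⊕ Fin m) (j : Fin m) :
      hess2 h p i (.inl j) = -hess2 g p i (.inr j) :=
    hess2_apply_eq_neg_of_eventuallyEq (hCR2.mono fun q hq => by simp [hq j]) i
  ext i (j | j) <;>
    simp [Matrix.mul_apply, Fintype.sum_sum_type, Matrix.J, Matrix.one_apply, hcol_inl, hcol_inr]

end Hessian

theorem statement3_general
    (m : ℕ) (W : Set ((Fin m → ℝ) × (Fin m → ℝ))) (hWopen : IsOpen W)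
    (u v : (Fin m → ℝ) × (Fin m → ℝ) → ℝ)
    (hCR1 : ∀ p ∈ W, ∀ j : Fin m,
      fderiv ℝ u p (eb (Sum.inl j)) = fderiv ℝ v p (eb (Sum.inr j)))
    (hCR2 : ∀ p ∈ W, ∀ j : Fin m,
      fderiv ℝ u p (eb (Sum.inr j)) = - fderiv ℝ v p (eb (Sum.inl j))) :
    ∀ (θ₁ θ₂ : ℝ), ∀ p ∈ W,
      Matrix.det (θ₁ • hess2 u p + θ₂ • hess2 v p)
        = (θ₁ ^ 2 + θ₂ ^ 2) ^ m * Matrix.det (hess2 u p) := by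
  intro θ₁ θ₂ p hp
  have hW : W ∈ 𝓝 p := hWopen.mem_nhds hp
  have hv : hess2 v p = -(hess2 u p * Matrix.J (Fin m) ℝ) :=
    hess2_eq_neg_mul_J_of_eventually_cauchyRiemann (eventually_of_mem hW hCR1)
      (eventually_of_mem hW hCR2)
  have hpencil : θ₁ • hess2 u p + θ₂ • hess2 v p
      = hess2 u p * (θ₁ • (1 : Matrix _ _ ℝ) + (-θ₂) • Matrix.J (Fin m) ℝ) := by
    rw [hv, Matrix.mul_add, Matrix.mul_smul, Matrix.mul_one, Matrix.mul_smul, smul_neg, neg_smul]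
  rw [hpencil, Matrix.det_mul, Matrix.det_smul_one_add_smul_J, Fintype.card_fin, neg_sq, mul_comm]

/-- the Hessian pencil determinant identity for a pair of C² functions satisfying
the Cauchy–Riemann equations. -/
theorem statement3
    (m : ℕ) (W : Set ((Fin m → ℝ) × (Fin m → ℝ))) (hWopen : IsOpen W)
    (u v : (Fin m → ℝ) × (Fin m → ℝ) → ℝ)
    (hu : ContDiffOn ℝ 2 u W) (hv : ContDiffOn ℝ 2 v W)
    (hCR1 : ∀ p ∈ W, ∀ j : Fin m,
      fderiv ℝ u p (eb (Sum.inl j)) = fderiv ℝ v p (eb (Sum.inr j)))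
    (hCR2 : ∀ p ∈ W, ∀ j : Fin m,
      fderiv ℝ u p (eb (Sum.inr j)) = - fderiv ℝ v p (eb (Sum.inl j))) :
    ∀ (θ₁ θ₂ : ℝ), ∀ p ∈ W,
      Matrix.det (θ₁ • hess2 u p + θ₂ • hess2 v p)
        = (θ₁ ^ 2 + θ₂ ^ 2) ^ m * Matrix.det (hess2 u p) :=
  statement3_general m W hWopen u v hCR1 hCR2

end
end

section
/- There exist c > 0 and Q₀ ∈ ℕ such that for every integer Q ≥ Q₀, the number of tuples (p₁, p₂, p₃, p₄, q) ∈ ℤ⁴ × ℤ with 1 ≤ q ≤ Q, |p₁| < q, |p₂| < q, q·p₃ = p₁² − p₂², and q·p₄ = 2·p₁·p₂ is at least c · Q^{3/2}. Equivalently, the number of pairs (p, q) ∈ ℤ⁴ × ℤ with 1 ≤ q ≤ Q such that p/q lies on the real surface {(x, y, x² − y², 2xy) : −1 < x, y < 1} ⊆ ℝ⁴ is at least c · Q^{3/2}. -/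
/-!
For `m ≥ 1` and `|a|, |b| < m`, the point `z = (a + b i) / m` has `z² = (a² - b² + 2ab i) / m²`, so
`((a m, b m, a² - b², 2ab), m²)` is a point of the surface with denominator `m²`. Letting `m` range
over `[K, 2K)` and `a, b` over `[0, K)` with `K ≈ √Q / 2` gives `K³ ≫ Q^{3/2}` distinct such points.
-/

open Finset

def complexParabolaPoints (Q : ℤ) : Set ((ℤ × ℤ × ℤ × ℤ) × ℤ) :=
  {t | 1 ≤ t.2 ∧ t.2 ≤ Q ∧ |t.1.1| < t.2 ∧ |t.1.2.1| < t.2 ∧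
    t.2 * t.1.2.2.1 = t.1.1 ^ 2 - t.1.2.1 ^ 2 ∧ t.2 * t.1.2.2.2 = 2 * t.1.1 * t.1.2.1}

def complexParabolaParam (x : ℤ × ℤ × ℤ) : (ℤ × ℤ × ℤ × ℤ) × ℤ :=
  ((x.2.1 * x.1, x.2.2 * x.1, x.2.1 ^ 2 - x.2.2 ^ 2, 2 * x.2.1 * x.2.2), x.1 ^ 2)

theorem complexParabolaPoints_finite (Q : ℤ) : (complexParabolaPoints Q).Finite := by
  have hbox := (Set.finite_Icc (-Q) Q).prod ((Set.finite_Icc (-Q) Q).prod (Set.finite_Icc 1 Q))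
  refine (hbox.image fun x : ℤ × ℤ × ℤ =>
    ((x.1, x.2.1, (x.1 ^ 2 - x.2.1 ^ 2) / x.2.2, 2 * x.1 * x.2.1 / x.2.2), x.2.2)).subset ?_
  rintro ⟨⟨p₁, p₂, p₃, p₄⟩, q⟩ ⟨hq, hqQ, hp₁, hp₂, hp₃, hp₄⟩
  dsimp only at hq hqQ hp₁ hp₂ hp₃ hp₄
  rw [abs_lt] at hp₁ hp₂
  refine ⟨(p₁, p₂, q), ?_, ?_⟩
  · simp only [Set.mem_prod, Set.mem_Icc]
    omega
  · dsimp only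
    rw [← hp₃, ← hp₄, Int.mul_ediv_cancel_left _ (by omega), Int.mul_ediv_cancel_left _ (by omega)]

theorem complexParabolaParam_mem {Q : ℤ} {x : ℤ × ℤ × ℤ} (hm : 0 < x.1) (hmQ : x.1 ^ 2 ≤ Q)
    (ha : |x.2.1| < x.1) (hb : |x.2.2| < x.1) :
    complexParabolaParam x ∈ complexParabolaPoints Q := by
  simp only [complexParabolaPoints, complexParabolaParam, Set.mem_ofPred_eq, abs_mul, abs_of_pos hm]
  exact ⟨by nlinarith, hmQ, by nlinarith, by nlinarith, by ring, by ring⟩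

theorem complexParabolaParam_injOn : Set.InjOn complexParabolaParam {x | 0 < x.1} := by
  rintro ⟨m, a, b⟩ (hm : 0 < m) ⟨m', a', b'⟩ (hm' : 0 < m') h
  simp only [complexParabolaParam, Prod.mk.injEq] at h
  obtain ⟨⟨ha, hb, -, -⟩, hmm⟩ := h
  obtain rfl : m = m' := (pow_left_inj₀ hm.le hm'.le two_ne_zero).mp hmm
  rw [mul_right_cancel₀ hm.ne' ha, mul_right_cancel₀ hm.ne' hb]

theorem cube_le_ncard_complexParabolaPoints {K : ℕ} {Q : ℤ} (hKQ : (2 * K : ℤ) ^ 2 ≤ Q) :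
    K ^ 3 ≤ (complexParabolaPoints Q).ncard := by
  let box : Finset (ℤ × ℤ × ℤ) := Ico (K : ℤ) (2 * K) ×ˢ Ico 0 (K : ℤ) ×ˢ Ico 0 (K : ℤ)
  have hbox : ∀ x ∈ box, 0 < x.1 ∧ x.1 ^ 2 ≤ Q ∧ |x.2.1| < x.1 ∧ |x.2.2| < x.1 := by
    rintro ⟨m, a, b⟩ hx
    simp only [box, mem_product, mem_Ico] at hx
    obtain ⟨⟨hKm, hm⟩, ⟨ha₀, ha⟩, hb₀, hb⟩ := hx
    refine ⟨by omega, by nlinarith, ?_, ?_⟩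
    · rw [abs_of_nonneg ha₀]; omega
    · rw [abs_of_nonneg hb₀]; omega
  calc K ^ 3 = #(box.image complexParabolaParam) := by
        rw [card_image_of_injOn fun x hx y hy =>
          complexParabolaParam_injOn (hbox x hx).1 (hbox y hy).1]
        simp only [box, card_product, Int.card_Ico, sub_zero, Int.toNat_natCast,
          show (2 * K : ℤ) - K = K by ring]
        ring
    _ ≤ (complexParabolaPoints Q).ncard := by
        rw [← Set.ncard_coe_finset, coe_image]
        refine Set.ncard_le_ncard (Set.image_subset_iff.mpr fun x hx => ?_)
          (complexParabolaPoints_finite Q)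
        obtain ⟨h1, h2, h3, h4⟩ := hbox x hx
        exact complexParabolaParam_mem h1 h2 h3 h4

theorem sqrt_le_four_mul_nat_sqrt_div_two {Q : ℕ} (hQ : 4 ≤ Q) :
    √(Q : ℝ) ≤ 4 * (Nat.sqrt Q / 2 : ℕ) := by
  have h2 : 2 ≤ Nat.sqrt Q := Nat.le_sqrt.mpr hQ
  have hK : (Nat.sqrt Q : ℝ) + 1 ≤ 4 * (Nat.sqrt Q / 2 : ℕ) := by exact_mod_cast (by omega)
  linarith [Real.real_sqrt_lt_nat_sqrt_succ (a := Q)]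

/-- lower bound for the number of rational points with denominator at most `Q`
on the complex parabola `{(z, z²)}`, viewed as a real codimension-2 surface in `ℝ⁴`. -/
theorem statement10 :
    ∃ c : ℝ, 0 < c ∧ ∃ Q₀ : ℕ, ∀ Q : ℕ, Q₀ ≤ Q →
      c * (Q : ℝ) ^ ((3 : ℝ) / 2) ≤
        (Set.ncard {t : (ℤ × ℤ × ℤ × ℤ) × ℤ |
          1 ≤ t.2 ∧ t.2 ≤ (Q : ℤ) ∧ |t.1.1| < t.2 ∧ |t.1.2.1| < t.2 ∧
          t.2 * t.1.2.2.1 = t.1.1 ^ 2 - t.1.2.1 ^ 2 ∧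
          t.2 * t.1.2.2.2 = 2 * t.1.1 * t.1.2.1} : ℝ) := by
  refine ⟨1 / 64, by norm_num, 4, fun Q hQ => ?_⟩
  change _ ≤ ((complexParabolaPoints Q).ncard : ℝ)
  set K := Nat.sqrt Q / 2
  have hKQ : (2 * K : ℤ) ^ 2 ≤ Q := by
    have : (2 * K) * (2 * K) ≤ Q := Nat.le_sqrt.mp (by omega)
    exact_mod_cast (sq (2 * K)).trans_le this
  calc 1 / 64 * (Q : ℝ) ^ ((3 : ℝ) / 2) = (√(Q : ℝ) / 4) ^ 3 := by
        rw [div_pow, Real.sqrt_eq_rpow, ← Real.rpow_mul_natCast (by positivity)]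
        norm_num
        ring
    _ ≤ (K : ℝ) ^ 3 := by gcongr; linarith [sqrt_le_four_mul_nat_sqrt_div_two hQ]
    _ ≤ (complexParabolaPoints Q).ncard := mod_cast cube_le_ncard_complexParabolaPoints hKQ
end

section
/- There exist c > 0 and Q₀ ∈ ℕ such that for every integer Q ≥ Q₀, the number of distinct complex numbers z with |ℜz| < 1 and |ℑz| < 1 for which there exists q ∈ ℤ[i] with 0 < |q|∞ ≤ Q, q·z ∈ ℤ[i] and q·z² ∈ ℤ[i], is at least c · Q². (Each such z yields a distinct Gaussian rational point (z, z²) on the complex parabola ℙ¹_ℂ := {(z, z²) : |ℜz| < 1, |ℑz| < 1} ⊆ ℂ², counted by the Gaussian rational counting function at δ = 0.) -/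
/-!
For `s` in the box `(N, 2N]²` of Gaussian integers and `w` in `[1, N]²`, the point `z = w / s`
qualifies with `q = s²`, since `|s²|∞ ≤ 8N² ≤ Q`; there are `N⁴ ≍ Q²` such pairs. A pair whose
fraction is `ω / σ` in lowest terms has the form `(tσ, tω)` with `N t ≤ 8N² / N σ`. Hence a fraction
whose reduced denominator has norm `> T` is hit by `O(N² / T)` pairs, while only `O(T N²)` pairs
reduce to a denominator of norm `≤ T`. With `T` a small multiple of `N²`, at least half of the pairs
land on fractions of bounded multiplicity, giving `≫ N⁴` distinct points.
-/

noncomputable section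

/-- The `ℓ^∞` norm `max(|ℜz|, |ℑz|)` of a complex number. -/
def cnorm (z : ℂ) : ℝ := max |z.re| |z.im|

/-- `z ∈ ℂ` is a Gaussian integer. -/
def IsGaussInt (z : ℂ) : Prop := ∃ a b : ℤ, z = (a : ℂ) + (b : ℂ) * Complex.I

open GaussianInt Finset

local notation "ℤ[i]" => GaussianInt

lemma cnorm_nonneg (z : ℂ) : 0 ≤ cnorm z := (abs_nonneg _).trans (le_max_left _ _)

lemma cnorm_pos {z : ℂ} (hz : z ≠ 0) : 0 < cnorm z := by
  refine (cnorm_nonneg z).lt_of_ne fun h => hz (Complex.ext ?_ ?_)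
  · simpa using le_antisymm (h ▸ le_max_left _ _) (abs_nonneg z.re)
  · simpa using le_antisymm (h ▸ le_max_right _ _) (abs_nonneg z.im)

lemma cnorm_mul_le (z w : ℂ) : cnorm (z * w) ≤ 2 * cnorm z * cnorm w := by
  have hz₁ : |z.re| ≤ cnorm z := le_max_left _ _
  have hz₂ : |z.im| ≤ cnorm z := le_max_right _ _
  have hw₁ : |w.re| ≤ cnorm w := le_max_left _ _
  have hw₂ : |w.im| ≤ cnorm w := le_max_right _ _
  have h₁ : |z.re * w.re| ≤ cnorm z * cnorm w := by
    rw [abs_mul]; exact mul_le_mul hz₁ hw₁ (abs_nonneg _) (cnorm_nonneg z)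
  have h₂ : |z.im * w.im| ≤ cnorm z * cnorm w := by
    rw [abs_mul]; exact mul_le_mul hz₂ hw₂ (abs_nonneg _) (cnorm_nonneg z)
  have h₃ : |z.re * w.im| ≤ cnorm z * cnorm w := by
    rw [abs_mul]; exact mul_le_mul hz₁ hw₂ (abs_nonneg _) (cnorm_nonneg z)
  have h₄ : |z.im * w.re| ≤ cnorm z * cnorm w := by
    rw [abs_mul]; exact mul_le_mul hz₂ hw₁ (abs_nonneg _) (cnorm_nonneg z)
  refine max_le ?_ ?_
  · rw [Complex.mul_re]; linarith [abs_sub _ _ |>.trans (add_le_add h₁ h₂)]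
  · rw [Complex.mul_im]; linarith [abs_add_le _ _ |>.trans (add_le_add h₃ h₄)]

lemma normSq_le_two_mul_cnorm_sq (z : ℂ) : Complex.normSq z ≤ 2 * cnorm z ^ 2 := by
  have h₁ : z.re ^ 2 ≤ cnorm z ^ 2 := by rw [← sq_abs]; gcongr; exact le_max_left _ _
  have h₂ : z.im ^ 2 ≤ cnorm z ^ 2 := by rw [← sq_abs]; gcongr; exact le_max_right _ _
  rw [Complex.normSq_apply]; nlinarith

lemma isGaussInt_iff {z : ℂ} : IsGaussInt z ↔ ∃ x : ℤ[i], (x : ℂ) = z := by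
  constructor
  · rintro ⟨a, b, rfl⟩; exact ⟨⟨a, b⟩, toComplex_def' a b⟩
  · rintro ⟨x, rfl⟩; exact ⟨x.re, x.im, toComplex_def x⟩

lemma isGaussInt_coe (x : ℤ[i]) : IsGaussInt x := isGaussInt_iff.mpr ⟨x, rfl⟩

lemma abs_le_floor_sqrt {a : ℤ} {R : ℝ} (h : (a : ℝ) ^ 2 ≤ R) : |a| ≤ ⌊√R⌋₊ := by
  have h₁ : ((|a|.toNat : ℤ) : ℝ) ≤ √R := by
    rw [Int.toNat_of_nonneg (abs_nonneg a)]; push_cast; exact Real.abs_le_sqrt h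
  have := Nat.le_floor (α := ℝ) (by exact_mod_cast h₁)
  omega

namespace GaussianInt

lemma norm_eq_sq_add_sq (x : ℤ[i]) : x.norm = x.re ^ 2 + x.im ^ 2 := by
  simp only [Zsqrtd.norm]; ring

def squareBox (a b : ℤ) : Finset ℤ[i] :=
  (Icc a b ×ˢ Icc a b).image fun p => ⟨p.1, p.2⟩

lemma mem_squareBox {a b : ℤ} {x : ℤ[i]} :
    x ∈ squareBox a b ↔ (a ≤ x.re ∧ x.re ≤ b) ∧ a ≤ x.im ∧ x.im ≤ b := by
  simp only [squareBox, mem_image, mem_product, mem_Icc, Prod.exists]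
  constructor
  · rintro ⟨u, v, h, rfl⟩; exact h
  · intro h; exact ⟨x.re, x.im, h, rfl⟩

lemma card_squareBox (a b : ℤ) : #(squareBox a b) = (b + 1 - a).toNat ^ 2 := by
  rw [squareBox, card_image_of_injective _ fun p q h => Prod.ext (congrArg Zsqrtd.re h)
    (congrArg Zsqrtd.im h), card_product, Int.card_Icc, sq]

def normBall (R : ℝ) : Finset ℤ[i] :=
  (squareBox (-⌊√R⌋₊) ⌊√R⌋₊).filter fun x => (x.norm : ℝ) ≤ R

@[simp]
lemma mem_normBall {x : ℤ[i]} {R : ℝ} : x ∈ normBall R ↔ (x.norm : ℝ) ≤ R := by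
  refine ⟨fun h => (mem_filter.mp h).2, fun h => mem_filter.mpr ⟨?_, h⟩⟩
  have hx : (x.norm : ℝ) = (x.re : ℝ) ^ 2 + (x.im : ℝ) ^ 2 := by
    rw [norm_eq_sq_add_sq]; push_cast; ring
  have hre := abs_le_floor_sqrt (a := x.re) (R := R) (by nlinarith [sq_nonneg (x.im : ℝ)])
  have him := abs_le_floor_sqrt (a := x.im) (R := R) (by nlinarith [sq_nonneg (x.re : ℝ)])
  rw [abs_le] at hre him
  exact mem_squareBox.mpr ⟨hre, him⟩

lemma card_normBall_le {R : ℝ} (hR : 1 ≤ R) : (#(normBall R) : ℝ) ≤ 9 * R := by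
  set n := ⌊√R⌋₊
  have hcard : #(normBall R) ≤ (2 * n + 1) ^ 2 := by
    refine (card_filter_le _ _).trans (card_squareBox _ _).le |>.trans (le_of_eq ?_)
    congr 1; omega
  have hn : (1 : ℝ) ≤ n := by
    exact_mod_cast Nat.le_floor (by simpa using Real.sqrt_le_sqrt hR)
  have hnR : (n : ℝ) ^ 2 ≤ R := by
    calc (n : ℝ) ^ 2 ≤ √R ^ 2 := by gcongr; exact Nat.floor_le (Real.sqrt_nonneg R)
      _ = R := Real.sq_sqrt (by linarith)
  calc (#(normBall R) : ℝ) ≤ (2 * n + 1) ^ 2 := by exact_mod_cast hcard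
    _ ≤ 9 * R := by nlinarith

lemma exists_reduced_fraction (s w : ℤ[i]) (hs : s ≠ 0) :
    ∃ g σ ω : ℤ[i], s = g * σ ∧ w = g * ω ∧ IsCoprime σ ω := by
  obtain ⟨σ, ω, g, h, rfl, rfl⟩ := UniqueFactorizationMonoid.exists_reduced_factors s hs w
  exact ⟨g, σ, ω, rfl, rfl, h.isCoprime⟩

lemma norm_le_div_of_eq_mul {s g σ : ℤ[i]} {M : ℝ} (hσ : σ ≠ 0) (h : s = g * σ)
    (hs : (s.norm : ℝ) ≤ M) : (g.norm : ℝ) ≤ M / σ.norm := by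
  rw [le_div_iff₀ (by exact_mod_cast norm_pos.mpr hσ), ← Int.cast_mul, ← Zsqrtd.norm_mul, ← h]
  exact hs

lemma exists_eq_mul_of_div_eq_div {s w σ ω : ℤ[i]} (hs : s ≠ 0) (hσ : σ ≠ 0)
    (hσω : IsCoprime σ ω) (h : (w / s : ℂ) = ω / σ) : ∃ t, s = σ * t ∧ w = ω * t := by
  rw [div_eq_div_iff (by simpa using hs) (by simpa using hσ), ← map_mul, ← map_mul,
    toComplex_inj] at h
  obtain ⟨t, rfl⟩ := hσω.dvd_of_dvd_mul_left ⟨w, by rw [← h]; ring⟩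
  exact ⟨t, rfl, mul_left_cancel₀ hσ (by rw [mul_comm, h]; ring)⟩

lemma card_filter_div_eq_le {P : Finset (ℤ[i] × ℤ[i])} {M : ℝ} {σ ω : ℤ[i]} (hσ : σ ≠ 0)
    (hσω : IsCoprime σ ω) (hσM : (σ.norm : ℝ) ≤ M) (hP : ∀ p ∈ P, p.1 ≠ 0 ∧ (p.1.norm : ℝ) ≤ M) :
    (#{p ∈ P | (p.2 / p.1 : ℂ) = ω / σ} : ℝ) ≤ 9 * (M / σ.norm) := by
  have hσ' : (0 : ℝ) < σ.norm := by exact_mod_cast norm_pos.mpr hσ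
  have hsub : {p ∈ P | (p.2 / p.1 : ℂ) = ω / σ} ⊆
      (normBall (M / σ.norm)).image fun t => (σ * t, ω * t) := by
    intro p hp
    obtain ⟨hpP, hpz⟩ := mem_filter.mp hp
    obtain ⟨hs, hsM⟩ := hP p hpP
    obtain ⟨t, hs, hw⟩ := exists_eq_mul_of_div_eq_div hs hσ hσω hpz
    exact mem_image.mpr ⟨t, mem_normBall.mpr (norm_le_div_of_eq_mul hσ (hs.trans (mul_comm _ _))
      hsM), by rw [← hs, ← hw]⟩
  calc (#{p ∈ P | (p.2 / p.1 : ℂ) = ω / σ} : ℝ) ≤ #(normBall (M / σ.norm)) := by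
        exact_mod_cast (card_le_card hsub).trans card_image_le
    _ ≤ 9 * (M / σ.norm) := card_normBall_le (by rwa [le_div_iff₀ hσ', one_mul])

/-- Contains every pair `(s, w)` with `N w ≤ N s ≤ M` whose fraction `w / s` reduces to a
denominator of norm at most `T`. -/
def smallDenomPairs (T M : ℝ) : Finset (ℤ[i] × ℤ[i]) :=
  {σ ∈ normBall T | σ ≠ 0}.biUnion fun σ =>
    (normBall σ.norm ×ˢ normBall (M / σ.norm)).image fun x => (x.2 * σ, x.2 * x.1)

lemma card_smallDenomPairs_le {T M : ℝ} (hT : 1 ≤ T) (hTM : T ≤ M) :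
    (#(smallDenomPairs T M) : ℝ) ≤ 729 * T * M := by
  have hfiber : ∀ σ ∈ {σ ∈ normBall T | σ ≠ 0},
      (#((normBall σ.norm ×ˢ normBall (M / σ.norm)).image fun x => (x.2 * σ, x.2 * x.1)) : ℝ)
        ≤ 81 * M := by
    intro σ hσ
    obtain ⟨hσT, hσ0⟩ := mem_filter.mp hσ
    have hσ1 : (1 : ℝ) ≤ σ.norm := by exact_mod_cast norm_pos.mpr hσ0
    have hσM : (σ.norm : ℝ) ≤ M := (mem_normBall.mp hσT).trans hTM
    calc _ ≤ (#(normBall σ.norm) : ℝ) * #(normBall (M / σ.norm)) := by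
          exact_mod_cast card_image_le.trans (card_product _ _).le
      _ ≤ (9 * σ.norm) * (9 * (M / σ.norm)) := by
          gcongr
          · exact card_normBall_le hσ1
          · exact card_normBall_le (by rwa [le_div_iff₀ (by linarith), one_mul])
      _ = 81 * M := by field_simp; ring
  calc (#(smallDenomPairs T M) : ℝ) ≤ ∑ σ ∈ {σ ∈ normBall T | σ ≠ 0}, 81 * M := by
        refine (Nat.cast_le.mpr card_biUnion_le).trans ?_
        push_cast
        exact sum_le_sum hfiber
    _ ≤ (9 * T) * (81 * M) := by
        rw [sum_const, nsmul_eq_mul]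
        gcongr
        · linarith
        · exact (Nat.cast_le.mpr (card_filter_le _ _)).trans (card_normBall_le hT)
    _ = 729 * T * M := by ring

lemma mul_mem_smallDenomPairs {T M : ℝ} {g σ ω : ℤ[i]} (hg : g ≠ 0) (hσ : σ ≠ 0)
    (hσT : (σ.norm : ℝ) ≤ T) (hωσ : (g * ω).norm ≤ (g * σ).norm) (hM : ((g * σ).norm : ℝ) ≤ M) :
    (g * σ, g * ω) ∈ smallDenomPairs T M := by
  refine mem_biUnion.mpr ⟨σ, mem_filter.mpr ⟨mem_normBall.mpr hσT, hσ⟩, ?_⟩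
  refine mem_image.mpr ⟨(ω, g), mem_product.mpr ⟨mem_normBall.mpr ?_, mem_normBall.mpr ?_⟩, rfl⟩
  · rw [Zsqrtd.norm_mul, Zsqrtd.norm_mul] at hωσ
    exact_mod_cast le_of_mul_le_mul_left hωσ (norm_pos.mpr hg)
  · exact norm_le_div_of_eq_mul hσ rfl hM

theorem card_le_add_card_image_div {P : Finset (ℤ[i] × ℤ[i])} {T M : ℝ} (hT : 1 ≤ T) (hTM : T ≤ M)
    (hP : ∀ p ∈ P, p.1 ≠ 0 ∧ p.2.norm ≤ p.1.norm ∧ (p.1.norm : ℝ) ≤ M) :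
    (#P : ℝ) ≤ 729 * T * M + 9 * (M / T) * #(P.image fun p => (p.2 / p.1 : ℂ)) := by
  set f : ℤ[i] × ℤ[i] → ℂ := fun p => p.2 / p.1
  set large := {p ∈ P | p ∉ smallDenomPairs T M}
  have hP' : ∀ p ∈ P, p.1 ≠ 0 ∧ (p.1.norm : ℝ) ≤ M := fun p hp => ⟨(hP p hp).1, (hP p hp).2.2⟩
  have hfiber : ∀ p ∈ large, (#{p' ∈ large | f p' = f p} : ℝ) ≤ 9 * (M / T) := by
    intro p hp
    obtain ⟨hpP, hpT⟩ := mem_filter.mp hp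
    obtain ⟨hs, hws, hsM⟩ := hP p hpP
    obtain ⟨g, σ, ω, hgσ, hgω, hσω⟩ := exists_reduced_fraction p.1 p.2 hs
    have hg : g ≠ 0 := left_ne_zero_of_mul (hgσ ▸ hs)
    have hσ : σ ≠ 0 := right_ne_zero_of_mul (hgσ ▸ hs)
    have hσM : (σ.norm : ℝ) ≤ M := by
      refine le_trans ?_ hsM
      rw [hgσ, Zsqrtd.norm_mul]
      exact_mod_cast le_mul_of_one_le_left (norm_nonneg σ) (norm_pos.mpr hg)
    have hfp : f p = ω / σ := by
      simp only [f, hgσ, hgω, map_mul]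
      exact mul_div_mul_left _ _ (by simpa using hg)
    have hTσ : T < σ.norm := by
      by_contra! hσT
      rw [hgσ, hgω] at hws
      rw [hgσ] at hsM
      exact hpT (by
        simpa only [← hgσ, ← hgω, Prod.mk.eta] using mul_mem_smallDenomPairs hg hσ hσT hws hsM)
    calc (#{p' ∈ large | f p' = f p} : ℝ) ≤ #{p' ∈ P | f p' = ω / σ} := by
          rw [hfp]; exact_mod_cast card_le_card (filter_subset_filter _ (filter_subset _ _))
      _ ≤ 9 * (M / σ.norm) := card_filter_div_eq_le hσ hσω hσM hP'
      _ ≤ 9 * (M / T) := by gcongr; linarith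
  have hlarge : (#large : ℝ) ≤ 9 * (M / T) * #(large.image f) := by
    rw [card_eq_sum_card_image f large, mul_comm, ← nsmul_eq_mul, ← sum_const]
    push_cast
    refine sum_le_sum fun z hz => ?_
    obtain ⟨p, hp, rfl⟩ := mem_image.mp hz
    exact hfiber p hp
  calc (#P : ℝ) ≤ #(smallDenomPairs T M) + #large := by
        exact_mod_cast (card_le_card fun p hp => by
          by_cases h : p ∈ smallDenomPairs T M
          · exact mem_union_left _ h
          · exact mem_union_right _ (mem_filter.mpr ⟨hp, h⟩)).trans (card_union_le _ _)
    _ ≤ 729 * T * M + 9 * (M / T) * #(P.image f) := by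
        refine add_le_add (card_smallDenomPairs_le hT hTM) (hlarge.trans ?_)
        have hMT : 0 ≤ M / T := div_nonneg (by linarith) (by linarith)
        gcongr
        exact filter_subset _ _

def pairBox (N : ℕ) : Finset (ℤ[i] × ℤ[i]) := squareBox (N + 1) (2 * N) ×ˢ squareBox 1 N

lemma card_pairBox (N : ℕ) : #(pairBox N) = N ^ 4 := by
  rw [pairBox, card_product, card_squareBox, card_squareBox]
  have h₁ : (2 * (N : ℤ) + 1 - (N + 1)).toNat = N := by omega
  have h₂ : ((N : ℤ) + 1 - 1).toNat = N := by omega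
  rw [h₁, h₂]; ring

variable {N : ℕ} {p : ℤ[i] × ℤ[i]}

lemma norm_snd_lt_norm_fst_of_mem_pairBox (hp : p ∈ pairBox N) : p.2.norm < p.1.norm := by
  obtain ⟨hs, hw⟩ := mem_product.mp hp
  obtain ⟨⟨hs₁, -⟩, hs₂, -⟩ := mem_squareBox.mp hs
  obtain ⟨⟨hw₁, hw₂⟩, hw₃, hw₄⟩ := mem_squareBox.mp hw
  rw [norm_eq_sq_add_sq, norm_eq_sq_add_sq]
  nlinarith

lemma fst_ne_zero_of_mem_pairBox (hp : p ∈ pairBox N) : p.1 ≠ 0 :=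
  norm_pos.mp ((norm_nonneg _).trans_lt (norm_snd_lt_norm_fst_of_mem_pairBox hp))

lemma norm_fst_le_of_mem_pairBox (hp : p ∈ pairBox N) : (p.1.norm : ℝ) ≤ 8 * N ^ 2 := by
  obtain ⟨⟨hs₁, hs₂⟩, hs₃, hs₄⟩ := mem_squareBox.mp (mem_product.mp hp).1
  have : p.1.norm ≤ 8 * N ^ 2 := by rw [norm_eq_sq_add_sq]; nlinarith
  exact_mod_cast this

lemma cnorm_fst_le_of_mem_pairBox (hp : p ∈ pairBox N) : cnorm p.1 ≤ 2 * N := by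
  obtain ⟨⟨hs₁, hs₂⟩, hs₃, hs₄⟩ := mem_squareBox.mp (mem_product.mp hp).1
  have h₁ : |p.1.re| ≤ 2 * N := abs_le.mpr ⟨by omega, hs₂⟩
  have h₂ : |p.1.im| ≤ 2 * N := abs_le.mpr ⟨by omega, hs₄⟩
  rw [cnorm, ← intCast_re, ← intCast_im]
  exact max_le (by exact_mod_cast h₁) (by exact_mod_cast h₂)

lemma card_image_div_pairBox_ge (hN : 108 ≤ N) :
    (N : ℝ) ^ 4 / 1679616 ≤ #((pairBox N).image fun p => (p.2 / p.1 : ℂ)) := by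
  have hN' : (108 : ℝ) ≤ N := by exact_mod_cast hN
  have h := card_le_add_card_image_div (P := pairBox N) (T := N ^ 2 / 11664) (M := 8 * N ^ 2)
    (by rw [le_div_iff₀ (by norm_num)]; nlinarith) (by nlinarith)
    fun p hp => ⟨fst_ne_zero_of_mem_pairBox hp, (norm_snd_lt_norm_fst_of_mem_pairBox hp).le,
      norm_fst_le_of_mem_pairBox hp⟩
  rw [card_pairBox, show 8 * (N : ℝ) ^ 2 / (N ^ 2 / 11664) = 93312 by field_simp; ring] at h
  push_cast at h
  nlinarith

end GaussianInt

lemma finite_setOf_isGaussInt_cnorm_le (R : ℝ) : {z : ℂ | IsGaussInt z ∧ cnorm z ≤ R}.Finite := by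
  refine ((normBall (2 * R ^ 2)).image ((↑) : ℤ[i] → ℂ)).finite_toSet.subset ?_
  rintro z ⟨hz, hzR⟩
  obtain ⟨x, rfl⟩ := isGaussInt_iff.mp hz
  refine mem_image.mpr ⟨x, mem_normBall.mpr ?_, rfl⟩
  rw [intCast_real_norm]
  have := pow_le_pow_left₀ (cnorm_nonneg _) hzR 2
  linarith [normSq_le_two_mul_cnorm_sq (x : ℂ)]

def parabolaPoints (Q : ℝ) : Set ℂ :=
  {z : ℂ | |z.re| < 1 ∧ |z.im| < 1 ∧
    ∃ q : ℂ, IsGaussInt q ∧ 0 < cnorm q ∧ cnorm q ≤ Q ∧ IsGaussInt (q * z) ∧ IsGaussInt (q * z ^ 2)}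

lemma parabolaPoints_finite (Q : ℝ) : (parabolaPoints Q).Finite := by
  refine ((finite_setOf_isGaussInt_cnorm_le (2 * Q)).image2 (fun u q => u / q)
    (finite_setOf_isGaussInt_cnorm_le Q)).subset ?_
  rintro z ⟨hre, him, q, hq, hq0, hqQ, hqz, -⟩
  have hz : cnorm z ≤ 1 := max_le hre.le him.le
  refine ⟨q * z, ⟨hqz, ?_⟩, q, ⟨hq, hqQ⟩, ?_⟩
  · calc cnorm (q * z) ≤ 2 * cnorm q * cnorm z := cnorm_mul_le q z
      _ ≤ 2 * Q := by nlinarith [cnorm_nonneg z]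
  · have : q ≠ 0 := by rintro rfl; simp [cnorm] at hq0
    field_simp

lemma div_mem_parabolaPoints {s w : ℤ[i]} {Q : ℝ} (hs : s ≠ 0) (hws : w.norm < s.norm)
    (hQ : 2 * cnorm s ^ 2 ≤ Q) : (w / s : ℂ) ∈ parabolaPoints Q := by
  have hs' : (s : ℂ) ≠ 0 := by simpa using hs
  have hz : ‖(w / s : ℂ)‖ < 1 := by
    have : ‖(w : ℂ)‖ ^ 2 < ‖(s : ℂ)‖ ^ 2 := by
      rw [← Complex.normSq_eq_norm_sq, ← Complex.normSq_eq_norm_sq, ← intCast_real_norm,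
        ← intCast_real_norm]
      exact_mod_cast hws
    rw [norm_div, div_lt_one (norm_pos_iff.mpr hs')]
    exact lt_of_pow_lt_pow_left₀ 2 (norm_nonneg _) this
  refine ⟨(Complex.abs_re_le_norm _).trans_lt hz, (Complex.abs_im_le_norm _).trans_lt hz,
    s * s, ?_, cnorm_pos (mul_ne_zero hs' hs'), (cnorm_mul_le _ _).trans (by nlinarith), ?_, ?_⟩
  · simpa using isGaussInt_coe (s * s)
  · convert isGaussInt_coe (s * w) using 1; rw [map_mul]; field_simp
  · convert isGaussInt_coe (w * w) using 1; rw [map_mul]; field_simp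

/-- lower bound for the number of Gaussian rational points on the complex
parabola with denominator of `|·|∞`-norm at most `Q`. -/
theorem statement11 :
    ∃ c : ℝ, 0 < c ∧ ∃ Q₀ : ℕ, ∀ Q : ℕ, Q₀ ≤ Q →
      c * (Q : ℝ) ^ 2 ≤
        (Set.ncard {z : ℂ | |z.re| < 1 ∧ |z.im| < 1 ∧
          ∃ q : ℂ, IsGaussInt q ∧ 0 < cnorm q ∧ cnorm q ≤ (Q : ℝ) ∧
            IsGaussInt (q * z) ∧ IsGaussInt (q * z ^ 2)} : ℝ) := by
  refine ⟨1 / 6879707136, by norm_num, 8 * 108 ^ 2, fun Q hQ => ?_⟩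
  set N := Nat.sqrt (Q / 8)
  have hN : 108 ≤ N := Nat.le_sqrt.mpr (by omega)
  have hNQ : 8 * N ^ 2 ≤ Q := by have : N ^ 2 ≤ Q / 8 := Nat.sqrt_le' _; omega
  have hQN : (Q : ℝ) ≤ 64 * N ^ 2 := by
    have : Q / 8 < (N + 1) ^ 2 := Nat.lt_succ_sqrt' _
    have : Q < 8 * (N + 1) ^ 2 := by omega
    exact_mod_cast (by nlinarith : Q ≤ 64 * N ^ 2)
  have hsub : ↑((pairBox N).image fun p => (p.2 / p.1 : ℂ)) ⊆ parabolaPoints Q := by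
    intro z hz
    obtain ⟨p, hp, rfl⟩ := mem_image.mp hz
    refine div_mem_parabolaPoints (fst_ne_zero_of_mem_pairBox hp)
      (norm_snd_lt_norm_fst_of_mem_pairBox hp) ?_
    have := cnorm_fst_le_of_mem_pairBox hp
    have : (8 * N ^ 2 : ℝ) ≤ Q := by exact_mod_cast hNQ
    nlinarith [cnorm_nonneg (p.1 : ℂ)]
  have hcard := Set.ncard_le_ncard hsub (parabolaPoints_finite Q)
  rw [Set.ncard_coe_finset] at hcard
  change _ ≤ ((parabolaPoints Q).ncard : ℝ)
  calc 1 / 6879707136 * (Q : ℝ) ^ 2 ≤ (N : ℝ) ^ 4 / 1679616 := by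
        nlinarith [mul_le_mul hQN hQN (Nat.cast_nonneg Q) (by positivity)]
    _ ≤ (#((pairBox N).image fun p => (p.2 / p.1 : ℂ)) : ℝ) := card_image_div_pairBox_ge hN
    _ ≤ ((parabolaPoints Q).ncard : ℝ) := by exact_mod_cast hcard

end
end

section
/- Let n, R ∈ ℕ, let Φ = (Φ₁,…,Φ_R) : ℝ^{n+R} → ℝ^R be smooth (coordinates u = (x, y) ∈ ℝⁿ × ℝ^R), let U ⊆ ℝⁿ be open and f : U → ℝ^R smooth with Φ(x, f(x)) = 0 and det ∂_y Φ(x, f(x)) ≠ 0 for all x ∈ U (∂_y Φ the R×R Jacobian in the last R coordinates). Then for every x ∈ U and every s ∈ ℝ^R, setting t := (∂_y Φ(x, f(x)))ᵀ s ∈ ℝ^R, one has |det ∂_y Φ(x, f(x))|² · |det(Σ_{ℓ=1}^R t_ℓ f_ℓ''(x))| = |det M(x, s)|, where M(x, s) is the (n+2R)×(n+2R) block matrix with upper-left block Σ_{ℓ=1}^R s_ℓ ∂²_{uu}Φ_ℓ(x, f(x)) (the full (n+R)×(n+R) Hessian of Φ_ℓ in all n+R variables), upper-right block (∂_u Φ(x,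 f(x)))ᵀ, lower-left block ∂_u Φ(x, f(x)) (the R×(n+R) Jacobian of Φ), and lower-right block the R×R zero matrix. -/
/-!
Let `J` be the `(n+R) × n` matrix whose columns are the tangent vectors `(eᵢ, f'(x) eᵢ)` of the
graph. Differentiating `Φ (x, f x) = 0` once gives `Φ'(x, f x) J = 0`, and twice gives
`Jᵀ (∑ sₗ Φₗ'') J = -∑ₗ tₗ fₗ''`. Completing `J` to the unimodular matrix `P = [J | (0; 1)]` and
conjugating the bordered matrix by `diag(P, 1)` reduces its border to `A = ∂_y Φ`; a permutation of
rows and columns then makes it block triangular with diagonal blocks `A`, `Jᵀ H J` and `Aᵀ`.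
-/

open scoped BigOperators Matrix

noncomputable section

/-- The Hessian matrix of a function `g : ℝⁿ → ℝ` at a point. -/
def hess {n : ℕ} (g : (Fin n → ℝ) → ℝ) (x : Fin n → ℝ) : Matrix (Fin n) (Fin n) ℝ :=
  Matrix.of fun i j => fderiv ℝ (fun y => fderiv ℝ g y (Pi.single j 1)) x (Pi.single i 1)

/-- Standard basis vectors of `ℝⁿ × ℝ^R`, indexed by `Fin n ⊕ Fin R`. -/
def ebU {n R : ℕ} : Fin n ⊕ Fin R → (Fin n → ℝ) × (Fin R → ℝ) :=
  Sum.elim (fun i => (Pi.single i 1, 0)) (fun s => (0, Pi.single s 1))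

/-- The `R × R` Jacobian of `Φ : ℝⁿ × ℝ^R → ℝ^R` in the last `R` coordinates. -/
def dyPhi {n R : ℕ} (Φ : (Fin n → ℝ) × (Fin R → ℝ) → Fin R → ℝ)
    (p : (Fin n → ℝ) × (Fin R → ℝ)) : Matrix (Fin R) (Fin R) ℝ :=
  Matrix.of fun r s => fderiv ℝ (fun q => Φ q r) p (0, Pi.single s 1)

/-- The full `R × (n+R)` Jacobian of `Φ`. -/
def duPhi {n R : ℕ} (Φ : (Fin n → ℝ) × (Fin R → ℝ) → Fin R → ℝ)
    (p : (Fin n → ℝ) × (Fin R → ℝ)) : Matrix (Fin R) (Fin n ⊕ Fin R) ℝ :=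
  Matrix.of fun r c => fderiv ℝ (fun q => Φ q r) p (ebU c)

/-- The full `(n+R) × (n+R)` Hessian of the `ℓ`-th component of `Φ` in all `n+R` variables. -/
def hessU {n R : ℕ} (Φ : (Fin n → ℝ) × (Fin R → ℝ) → Fin R → ℝ) (ℓ : Fin R)
    (p : (Fin n → ℝ) × (Fin R → ℝ)) : Matrix (Fin n ⊕ Fin R) (Fin n ⊕ Fin R) ℝ :=
  Matrix.of fun c c' => fderiv ℝ (fun q => fderiv ℝ (fun q' => Φ q' ℓ) q (ebU c')) p (ebU c)

open Filter Topology Matrix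

section BorderedDeterminant

variable {m r 𝕜 : Type*} [Fintype m] [Fintype r] [DecidableEq m] [DecidableEq r]
  [CommRing 𝕜] [LinearOrder 𝕜] [IsStrictOrderedRing 𝕜]

theorem Matrix.abs_det_fromBlocks_fromRows_zero_fromCols_zero
    (G₁₁ : Matrix m m 𝕜) (G₁₂ : Matrix m r 𝕜) (G₂₁ : Matrix r m 𝕜) (G₂₂ : Matrix r r 𝕜)
    (B C : Matrix r r 𝕜) :
    |(fromBlocks (fromBlocks G₁₁ G₁₂ G₂₁ G₂₂) (fromRows 0 B) (fromCols 0 C) 0).det|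
      = |B.det| * |C.det| * |G₁₁.det| := by
  have hperm : (fromBlocks (fromBlocks G₁₁ G₁₂ G₂₁ G₂₂) (fromRows 0 B) (fromCols 0 C) 0).submatrix
      (Equiv.sumComm r (m ⊕ r))
      ((Equiv.sumAssoc r m r).symm.trans ((Equiv.sumComm r m).sumCongr (Equiv.refl r)))
      = fromBlocks C 0 (fromRows G₁₂ G₂₂) (fromBlocks G₁₁ 0 G₂₁ B) := by
    ext (_ | _ | _) (_ | _ | _) <;> simp
  rw [← abs_det_submatrix_equiv_equiv (Equiv.sumComm r (m ⊕ r))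
    ((Equiv.sumAssoc r m r).symm.trans ((Equiv.sumComm r m).sumCongr (Equiv.refl r))), hperm,
    det_fromBlocks_zero₁₂, det_fromBlocks_zero₁₂, abs_mul, abs_mul]
  ring

theorem Matrix.abs_det_fromBlocks_transpose_zero_of_mul_eq_zero
    (H : Matrix (m ⊕ r) (m ⊕ r) 𝕜) (D : Matrix r (m ⊕ r) 𝕜) (J : Matrix (m ⊕ r) m 𝕜)
    (hJ : J.toRows₁ = 1) (hDJ : D * J = 0) :
    |(fromBlocks H Dᵀ D 0).det| = |D.toCols₂.det| ^ 2 * |(Jᵀ * H * J).det| := by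
  set X : Matrix (m ⊕ r) r 𝕜 := fromRows 0 1
  have hP : (fromCols J X).det = 1 := by
    rw [← fromRows_toRows J, hJ, fromCols_fromRows_eq_fromBlocks, det_fromBlocks_zero₁₂]
    simp
  have hDX : D * X = D.toCols₂ := by
    rw [← fromCols_toCols D, fromCols_mul_fromRows]; simp
  set Q : Matrix ((m ⊕ r) ⊕ r) ((m ⊕ r) ⊕ r) 𝕜 := fromBlocks (fromCols J X) 0 0 1
  have hQ : Q.det = 1 := by simp [Q, hP]
  have hQMQ : Qᵀ * fromBlocks H Dᵀ D 0 * Q = fromBlocks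
      (fromBlocks (Jᵀ * H * J) (Jᵀ * H * X) (Xᵀ * H * J) (Xᵀ * H * X))
      (fromRows 0 D.toCols₂ᵀ) (fromCols 0 D.toCols₂) 0 := by
    simp [Q, fromBlocks_transpose, fromBlocks_multiply, transpose_fromCols, mul_fromCols,
      fromRows_mul, Matrix.mul_assoc, hDJ, hDX, ← transpose_mul]
  have hdet := congrArg det hQMQ
  rw [det_mul, det_mul, det_transpose, hQ, one_mul, mul_one] at hdet
  rw [hdet, abs_det_fromBlocks_fromRows_zero_fromCols_zero, det_transpose, sq]

end BorderedDeterminant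

section ImplicitDerivatives

variable {𝕜 E F G : Type*} [NontriviallyNormedField 𝕜]
  [NormedAddCommGroup E] [NormedSpace 𝕜 E] [NormedAddCommGroup F] [NormedSpace 𝕜 F]
  [NormedAddCommGroup G] [NormedSpace 𝕜 G]

theorem fderiv_fderiv_apply {g : E → F} {x : E} (h : DifferentiableAt 𝕜 (fderiv 𝕜 g) x)
    (v w : E) : fderiv 𝕜 (fun y => fderiv 𝕜 g y v) x w = fderiv 𝕜 (fderiv 𝕜 g) x w v := by
  rw [fderiv_clm_apply h (differentiableAt_const v)]
  simp

theorem hasFDerivAt_graph {f : E → F} {f' : E →L[𝕜] F} {x : E} (hf : HasFDerivAt f f' x) :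
    HasFDerivAt (fun y => (y, f y)) ((ContinuousLinearMap.id 𝕜 E).prod f') x :=
  (hasFDerivAt_id x).prodMk hf

theorem fderiv_apply_graph_tangent_eq_zero {Φ : E × F → G} {f : E → F} {x : E}
    (hΦ : DifferentiableAt 𝕜 Φ (x, f x)) (hf : DifferentiableAt 𝕜 f x)
    (hzero : ∀ᶠ y in 𝓝 x, Φ (y, f y) = 0) (v : E) :
    fderiv 𝕜 Φ (x, f x) (v, fderiv 𝕜 f x v) = 0 := by
  have hchain := hΦ.hasFDerivAt.comp x (hasFDerivAt_graph hf.hasFDerivAt)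
  have hconst : HasFDerivAt (fun y => Φ (y, f y)) (0 : E →L[𝕜] G) x :=
    (hasFDerivAt_const 0 x).congr_of_eventuallyEq hzero
  simpa using congrArg (· v) (hchain.unique hconst)

theorem fderiv_fderiv_apply_graph_tangent_add_eq_zero {Φ : E × F → G} {f : E → F} {x : E}
    (hΦ : ContDiffAt 𝕜 2 Φ (x, f x)) (hf : ContDiffAt 𝕜 2 f x)
    (hzero : ∀ᶠ y in 𝓝 x, Φ (y, f y) = 0) (v w : E) :
    fderiv 𝕜 (fderiv 𝕜 Φ) (x, f x) (w, fderiv 𝕜 f x w) (v, fderiv 𝕜 f x v)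
      + fderiv 𝕜 Φ (x, f x) (0, fderiv 𝕜 (fderiv 𝕜 f) x w v) = 0 := by
  have hgraph := hasFDerivAt_graph (hf.differentiableAt two_ne_zero).hasFDerivAt
  have hΦnear : ∀ᶠ y in 𝓝 x, ContDiffAt 𝕜 2 Φ (y, f y) :=
    hgraph.continuousAt.tendsto.eventually (hΦ.eventually (by simp))
  have hfirst : ∀ᶠ y in 𝓝 x, fderiv 𝕜 Φ (y, f y) (v, fderiv 𝕜 f y v) = 0 := by
    filter_upwards [hΦnear, hf.eventually (by simp), hzero.eventually_nhds] with y hΦy hfy hzy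
    exact fderiv_apply_graph_tangent_eq_zero (hΦy.differentiableAt two_ne_zero)
      (hfy.differentiableAt two_ne_zero) hzy v
  have hD2Φ : HasFDerivAt (fderiv 𝕜 Φ) (fderiv 𝕜 (fderiv 𝕜 Φ) (x, f x)) (x, f x) :=
    ((hΦ.fderiv_right (m := 1) le_rfl).differentiableAt one_ne_zero).hasFDerivAt
  have hD2f : HasFDerivAt (fderiv 𝕜 f) (fderiv 𝕜 (fderiv 𝕜 f) x) x :=
    ((hf.fderiv_right (m := 1) le_rfl).differentiableAt one_ne_zero).hasFDerivAt
  have htangent : HasFDerivAt (fun y => (v, fderiv 𝕜 f y v))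
      ((0 : E →L[𝕜] E).prod ((ContinuousLinearMap.apply 𝕜 F v).comp
        (fderiv 𝕜 (fderiv 𝕜 f) x))) x :=
    (hasFDerivAt_const v x).prodMk ((ContinuousLinearMap.apply 𝕜 F v).hasFDerivAt.comp x hD2f)
  have hchain := (hD2Φ.comp x hgraph).clm_apply htangent
  have hconst : HasFDerivAt (fun y => fderiv 𝕜 Φ (y, f y) (v, fderiv 𝕜 f y v)) (0 : E →L[𝕜] G) x :=
    (hasFDerivAt_const 0 x).congr_of_eventuallyEq hfirst
  simpa [add_comm] using congrArg (· w) (hchain.unique hconst)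

end ImplicitDerivatives

section Coordinates

variable {n R : ℕ}

theorem sum_sumElim_smul_ebU (u : (Fin n → ℝ) × (Fin R → ℝ)) :
    ∑ c, Sum.elim u.1 u.2 c • ebU c = u := by
  ext j <;> simp [Fintype.sum_sum_type, ebU, Prod.fst_sum, Prod.snd_sum, Finset.sum_apply,
    Pi.single_apply]

def coordMatrix {ι : Type*} (u : ι → (Fin n → ℝ) × (Fin R → ℝ)) :
    Matrix (Fin n ⊕ Fin R) ι ℝ :=
  Matrix.of fun c i => Sum.elim (u i).1 (u i).2 c

variable {ι : Type*} (Φ : (Fin n → ℝ) × (Fin R → ℝ) → Fin R → ℝ) (p : (Fin n → ℝ) × (Fin R → ℝ))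

theorem duPhi_toCols₂ : (duPhi Φ p).toCols₂ = dyPhi Φ p := rfl

theorem duPhi_mul_coordMatrix_apply (u : ι → (Fin n → ℝ) × (Fin R → ℝ)) (ℓ : Fin R) (i : ι) :
    (duPhi Φ p * coordMatrix u) ℓ i = fderiv ℝ (fun q => Φ q ℓ) p (u i) := by
  conv_rhs => rw [← sum_sumElim_smul_ebU (u i)]
  simp [Matrix.mul_apply, duPhi, coordMatrix, mul_comm]

theorem fderiv_apply_zero_prod_eq_sum_dyPhi (ℓ : Fin R) (w : Fin R → ℝ) :
    fderiv ℝ (fun q => Φ q ℓ) p (0, w) = ∑ r, dyPhi Φ p ℓ r * w r := by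
  conv_lhs => rw [← sum_sumElim_smul_ebU (0, w)]
  simp only [Fintype.sum_sum_type, Sum.elim_inl, Sum.elim_inr, Pi.zero_apply, zero_smul,
    Finset.sum_const_zero, zero_add, map_sum, map_smul, smul_eq_mul]
  simp [dyPhi, ebU, mul_comm]

theorem coordMatrix_transpose_mul_hessU_mul_coordMatrix_apply {ℓ : Fin R}
    (hΦ : DifferentiableAt ℝ (fderiv ℝ (fun q => Φ q ℓ)) p)
    (u u' : ι → (Fin n → ℝ) × (Fin R → ℝ)) (i j : ι) :
    ((coordMatrix u)ᵀ * hessU Φ ℓ p * coordMatrix u') i j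
      = fderiv ℝ (fderiv ℝ (fun q => Φ q ℓ)) p (u i) (u' j) := by
  conv_rhs => rw [← sum_sumElim_smul_ebU (u i), ← sum_sumElim_smul_ebU (u' j)]
  simp only [map_sum, map_smul, _root_.sum_apply, _root_.smul_apply]
  simp [Matrix.mul_apply, hessU, coordMatrix, fderiv_fderiv_apply hΦ, mul_comm]

theorem hess_apply_eq_fderiv_fderiv_apply {f : (Fin n → ℝ) → Fin R → ℝ} {x : Fin n → ℝ}
    (hf : ContDiffAt ℝ 2 f x) (r : Fin R) (i j : Fin n) :
    hess (fun y => f y r) x i j = fderiv ℝ (fderiv ℝ f) x (Pi.single i 1) (Pi.single j 1) r := by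
  have hD2f : DifferentiableAt ℝ (fderiv ℝ f) x :=
    (hf.fderiv_right (m := 1) le_rfl).differentiableAt one_ne_zero
  have hcomponent : (fun y => fderiv ℝ (fun z => f z r) y (Pi.single j 1))
      =ᶠ[𝓝 x] fun y => fderiv ℝ f y (Pi.single j 1) r := by
    filter_upwards [hf.eventually (by simp)] with y hy
    rw [fderiv_apply (hy.differentiableAt two_ne_zero)]
    rfl
  change fderiv ℝ (fun y => fderiv ℝ (fun z => f z r) y (Pi.single j 1)) x (Pi.single i 1) = _
  rw [hcomponent.fderiv_eq, fderiv_apply (hD2f.clm_apply (differentiableAt_const _))]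
  simp [fderiv_fderiv_apply hD2f]

end Coordinates

section Graph

variable {n R : ℕ} {Φ : (Fin n → ℝ) × (Fin R → ℝ) → Fin R → ℝ} {f : (Fin n → ℝ) → Fin R → ℝ}
  {x : Fin n → ℝ}

def graphTangent (f : (Fin n → ℝ) → Fin R → ℝ) (x : Fin n → ℝ) (i : Fin n) :
    (Fin n → ℝ) × (Fin R → ℝ) :=
  (Pi.single i 1, fderiv ℝ f x (Pi.single i 1))

theorem toRows₁_coordMatrix_graphTangent : (coordMatrix (graphTangent f x)).toRows₁ = 1 := by
  ext i j
  simp [coordMatrix, graphTangent, Pi.single_apply, Matrix.one_apply]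

theorem duPhi_mul_coordMatrix_graphTangent_eq_zero (hΦ : DifferentiableAt ℝ Φ (x, f x))
    (hf : DifferentiableAt ℝ f x) (hzero : ∀ᶠ y in 𝓝 x, Φ (y, f y) = 0) :
    duPhi Φ (x, f x) * coordMatrix (graphTangent f x) = 0 := by
  ext ℓ i
  rw [duPhi_mul_coordMatrix_apply]
  exact fderiv_apply_graph_tangent_eq_zero (differentiableAt_pi.mp hΦ ℓ) hf
    (hzero.mono fun y hy => congrFun hy ℓ) _

theorem coordMatrix_graphTangent_transpose_mul_hessU_mul_apply (hΦ : ContDiffAt ℝ 2 Φ (x, f x))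
    (hf : ContDiffAt ℝ 2 f x) (hzero : ∀ᶠ y in 𝓝 x, Φ (y, f y) = 0) (ℓ : Fin R) (i j : Fin n) :
    ((coordMatrix (graphTangent f x))ᵀ * hessU Φ ℓ (x, f x) * coordMatrix (graphTangent f x)) i j
      = -∑ r, dyPhi Φ (x, f x) ℓ r * hess (fun y => f y r) x i j := by
  have hΦℓ := contDiffAt_pi.mp hΦ ℓ
  have hsecond := fderiv_fderiv_apply_graph_tangent_add_eq_zero hΦℓ hf
    (hzero.mono fun y hy => congrFun hy ℓ) (Pi.single j 1) (Pi.single i 1)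
  rw [fderiv_apply_zero_prod_eq_sum_dyPhi] at hsecond
  rw [coordMatrix_transpose_mul_hessU_mul_coordMatrix_apply _ _
    ((hΦℓ.fderiv_right (m := 1) le_rfl).differentiableAt one_ne_zero)]
  simp only [graphTangent, hess_apply_eq_fderiv_fderiv_apply hf]
  linarith

theorem coordMatrix_graphTangent_transpose_mul_sum_smul_hessU_mul (hΦ : ContDiffAt ℝ 2 Φ (x, f x))
    (hf : ContDiffAt ℝ 2 f x) (hzero : ∀ᶠ y in 𝓝 x, Φ (y, f y) = 0) (s : Fin R → ℝ) :
    (coordMatrix (graphTangent f x))ᵀ * (∑ ℓ, s ℓ • hessU Φ ℓ (x, f x))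
        * coordMatrix (graphTangent f x)
      = -∑ ℓ, (∑ r, s r * dyPhi Φ (x, f x) r ℓ) • hess (fun y => f y ℓ) x := by
  ext i j
  simp only [Matrix.mul_sum, Matrix.sum_mul, Matrix.mul_smul, Matrix.smul_mul, Matrix.sum_apply,
    Matrix.smul_apply, smul_eq_mul, Matrix.neg_apply,
    coordMatrix_graphTangent_transpose_mul_hessU_mul_apply hΦ hf hzero, Finset.mul_sum,
    Finset.sum_mul, ← Finset.sum_neg_distrib]
  rw [Finset.sum_comm]
  refine Finset.sum_congr rfl fun _ _ => Finset.sum_congr rfl fun _ _ => by ring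

end Graph

theorem statement17_general
    (n R : ℕ)
    (Φ : (Fin n → ℝ) × (Fin R → ℝ) → Fin R → ℝ) (hΦ : ContDiff ℝ (⊤ : ℕ∞) Φ)
    (U : Set (Fin n → ℝ)) (hUopen : IsOpen U)
    (f : (Fin n → ℝ) → Fin R → ℝ) (hf : ContDiffOn ℝ (⊤ : ℕ∞) f U)
    (hgraph : ∀ x ∈ U, Φ (x, f x) = 0) :
    ∀ x ∈ U, ∀ s : Fin R → ℝ,
      |Matrix.det (dyPhi Φ (x, f x))| ^ 2 *
          |Matrix.det (∑ ℓ, (∑ r, s r * dyPhi Φ (x, f x) r ℓ) • hess (fun y => f y ℓ) x)| =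
        |Matrix.det (Matrix.fromBlocks
            (∑ ℓ, s ℓ • hessU Φ ℓ (x, f x))
            (duPhi Φ (x, f x))ᵀ
            (duPhi Φ (x, f x))
            (0 : Matrix (Fin R) (Fin R) ℝ))| := by
  intro x hx s
  have hf2 : ContDiffAt ℝ 2 f x :=
    (hf.contDiffAt (hUopen.mem_nhds hx)).of_le (by norm_cast)
  have hΦ2 : ContDiff ℝ 2 Φ := hΦ.of_le (by norm_cast)
  have hzero : ∀ᶠ y in 𝓝 x, Φ (y, f y) = 0 :=
    eventually_of_mem (hUopen.mem_nhds hx) hgraph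
  rw [abs_det_fromBlocks_transpose_zero_of_mul_eq_zero _ _ _ toRows₁_coordMatrix_graphTangent
    (duPhi_mul_coordMatrix_graphTangent_eq_zero (hΦ2.differentiable two_ne_zero _)
      (hf2.differentiableAt two_ne_zero) hzero),
    coordMatrix_graphTangent_transpose_mul_sum_smul_hessU_mul hΦ2.contDiffAt hf2 hzero,
    Matrix.det_neg, duPhi_toCols₂]
  simp [abs_mul]

/-- the implicit (defining-function) formulation of the curvature condition. -/
theorem statement17
    (n R : ℕ)
    (Φ : (Fin n → ℝ) × (Fin R → ℝ) → Fin R → ℝ) (hΦ : ContDiff ℝ (⊤ : ℕ∞) Φ)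
    (U : Set (Fin n → ℝ)) (hUopen : IsOpen U)
    (f : (Fin n → ℝ) → Fin R → ℝ) (hf : ContDiffOn ℝ (⊤ : ℕ∞) f U)
    (hgraph : ∀ x ∈ U, Φ (x, f x) = 0)
    (hreg : ∀ x ∈ U, Matrix.det (dyPhi Φ (x, f x)) ≠ 0) :
    ∀ x ∈ U, ∀ s : Fin R → ℝ,
      |Matrix.det (dyPhi Φ (x, f x))| ^ 2 *
          |Matrix.det (∑ ℓ, (∑ r, s r * dyPhi Φ (x, f x) r ℓ) • hess (fun y => f y ℓ) x)| =
        |Matrix.det (Matrix.fromBlocks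
            (∑ ℓ, s ℓ • hessU Φ ℓ (x, f x))
            (duPhi Φ (x, f x))ᵀ
            (duPhi Φ (x, f x))
            (0 : Matrix (Fin R) (Fin R) ℝ))| :=
  statement17_general n R Φ hΦ U hUopen f hf hgraph
end
end
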